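/- Let ℓ > 0 with ℓ/π ∉ ℤ, m > 0, and γ > 0. For all integers k, l with (k,l) ≠ (0,0), the complex number i·k + γ·m³·(k² + (π²/ℓ²)·l²)·(k² + (π²/ℓ²)·l² − 1) is nonzero. -/
import Mathlib


/-- Nonvanishing of the Fourier symbol of the linearised rimming-flow operator
`D_u F(0,0) φ = φ_θ + γ m³ Δ_ℓ(Δ_ℓ φ + φ)` for `(k,l) ≠ (0,0)` when `ℓ/π ∉ ℤ`. -/
theorem stmt0 (ℓ m γ : ℝ) (hℓ : 0 < ℓ) (hirr : ∀ n : ℤ, ℓ / Real.pi ≠ (n : ℝ))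
    (hm : 0 < m) (hγ : 0 < γ) (k l : ℤ) (hkl : (k, l) ≠ (0, 0)) :
    Complex.I * (k : ℂ) +
      ((γ * m ^ 3 * (((k : ℝ) ^ 2 + Real.pi ^ 2 / ℓ ^ 2 * (l : ℝ) ^ 2) *
        ((k : ℝ) ^ 2 + Real.pi ^ 2 / ℓ ^ 2 * (l : ℝ) ^ 2 - 1)) : ℝ) : ℂ) ≠ 0 := by
  intro h
  set r : ℝ := γ * m ^ 3 * (((k : ℝ) ^ 2 + Real.pi ^ 2 / ℓ ^ 2 * (l : ℝ) ^ 2) *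
        ((k : ℝ) ^ 2 + Real.pi ^ 2 / ℓ ^ 2 * (l : ℝ) ^ 2 - 1)) with hr
  rw [Complex.ext_iff] at h
  obtain ⟨h1, h2⟩ := h
  simp [Complex.add_re, Complex.add_im, Complex.mul_re, Complex.mul_im] at h1 h2
  -- h2 : (k:ℝ) = 0, h1 : r = 0
  have hk0 : k = 0 := by exact_mod_cast h2
  subst hk0
  have hl : l ≠ 0 := by
    intro hl0; exact hkl (by simp [hl0])
  have hpi := Real.pi_pos
  have hA : (0:ℝ) < Real.pi ^ 2 / ℓ ^ 2 * (l:ℝ) ^ 2 := by positivity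
  rw [hr] at h1
  push_cast at h1
  have hfac : ((0:ℝ)^2 + Real.pi ^ 2 / ℓ ^ 2 * (l:ℝ) ^ 2) *
      ((0:ℝ)^2 + Real.pi ^ 2 / ℓ ^ 2 * (l:ℝ) ^ 2 - 1) = 0 := by
    rcases mul_eq_zero.mp h1 with h' | h'
    · exact absurd h' (by positivity)
    · exact h'
  have h2' : Real.pi ^ 2 / ℓ ^ 2 * (l:ℝ) ^ 2 = 1 := by
    rcases mul_eq_zero.mp hfac with h' | h'
    · exact absurd h' (by positivity)
    · norm_num at h'; linarith
  have hℓ2 : ℓ ^ 2 = (Real.pi * |(l:ℝ)|) ^ 2 := by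
    have hℓne : ℓ ^ 2 ≠ 0 := by positivity
    field_simp at h2'
    rw [mul_pow, sq_abs]; linarith
  have hℓeq : ℓ = Real.pi * |(l:ℝ)| := by
    nlinarith [abs_nonneg ((l:ℝ)), sq_nonneg (ℓ - Real.pi * |(l:ℝ)|), mul_pos hpi (abs_pos.mpr (by exact_mod_cast hl : ((l:ℝ)) ≠ 0))]
  apply hirr |l|
  rw [hℓeq]
  push_cast
  rw [mul_comm, mul_div_assoc, div_self hpi.ne', mul_one]
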